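/- Let (r-1)k > 1 with r ≥ 2 and k > 0, let B be the open unit ball in ℝ², ψ_∞(R) = c(1-|R|²)^k, and define τ_{ij}(ψ) = ∫_B R_i ∂_{R_j}U(R) ψ(R) dR where U(R) = -k log(1-|R|²). Then there is a constant C = C(k, r) such that |τ(ψ)| ≤ C ‖ψ‖_{𝓛^r} for every ψ with finite weighted norm ‖ψ‖_{𝓛^r} = (∫_B ψ_∞ |ψ/ψ_∞|^r dR)^{1/r}. -/

import Mathlib

/-!
On the unit disc `∇U(R) = 2kR/(1-|R|²)`, so `G = R_i ∂_j U` satisfies `|G| ≤ 2k/(1-|R|²)`.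
Writing `|Gψ| = (ψ∞^{1/r'} |G|) · (ψ∞^{1/r} |ψ/ψ∞|)` with `r' = r/(r-1)`, Hölder bounds the
stress by `(∫_B ψ∞ |G|^{r'})^{1/r'} ‖ψ‖_{𝓛^r}`. The first factor is at most
`(∫_B c (2k)^{r'} (1-|R|²)^{k-r'})^{1/r'}`, finite because `k - r' > -1`, i.e. `(r-1)k > 1`.
-/

open MeasureTheory Set Metric

theorem Real.neg_one_lt_sub_conjExponent {r k : ℝ} (hk : 0 < k) (hrk : 1 < (r - 1) * k) :
    -1 < k - r.conjExponent := by
  have hr : 0 < r - 1 := pos_of_mul_pos_left (one_pos.trans hrk) hk.le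
  have hr' : r.conjExponent = 1 + 1 / (r - 1) := by
    unfold Real.conjExponent
    field_simp
    ring
  have : 1 / (r - 1) < k := by rwa [div_lt_iff₀ hr, mul_comm]
  linarith

theorem Real.rpow_one_div_mul_abs_rpow {s a : ℝ} (hs : s ≠ 0) (ha : 0 ≤ a) (b : ℝ) :
    (a ^ (1 / s) * |b|) ^ s = a * |b| ^ s := by
  rw [Real.mul_rpow (by positivity) (abs_nonneg b), ← Real.rpow_mul ha, one_div_mul_cancel hs,
    Real.rpow_one]

theorem mul_rpow_mul_abs_rpow_le {A k c p b g : ℝ} (hA : 0 ≤ A) (hc : 0 ≤ c) (hp : 0 ≤ p)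
    (hb : 0 < b) (hg : |g| ≤ A / b) : c * b ^ k * |g| ^ p ≤ c * A ^ p * b ^ (k - p) := by
  calc c * b ^ k * |g| ^ p ≤ c * b ^ k * (A / b) ^ p := by gcongr
    _ = c * A ^ p * b ^ (k - p) := by
      rw [Real.div_rpow hA hb.le, Real.rpow_sub hb]
      field_simp

section WeightedHolder

variable {α : Type*} [MeasurableSpace α] {μ : Measure α}

theorem memLp_ofReal_of_integrable_rpow {p : ℝ} (hp : 0 < p) {f : α → ℝ}
    (hf : AEStronglyMeasurable f μ) (hf₀ : 0 ≤ᵐ[μ] f) (h : Integrable (fun x => f x ^ p) μ) :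
    MemLp f (ENNReal.ofReal p) μ := by
  refine (integrable_norm_rpow_iff hf (by simpa using hp) ENNReal.ofReal_ne_top).1 (h.congr ?_)
  filter_upwards [hf₀] with x hx
  rw [ENNReal.toReal_ofReal hp.le, Real.norm_of_nonneg hx]

theorem abs_integral_mul_le_weighted_holder {p q : ℝ} (hpq : p.HolderConjugate q)
    {w G ψ : α → ℝ} (hw : ∀ᵐ x ∂μ, 0 < w x) (hwm : AEStronglyMeasurable w μ)
    (hGm : AEStronglyMeasurable G μ) (hψm : AEStronglyMeasurable ψ μ)
    (hG : Integrable (fun x => w x * |G x| ^ p) μ)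
    (hψ : Integrable (fun x => w x * |ψ x / w x| ^ q) μ) :
    |∫ x, G x * ψ x ∂μ| ≤
      (∫ x, w x * |G x| ^ p ∂μ) ^ (1 / p) * (∫ x, w x * |ψ x / w x| ^ q ∂μ) ^ (1 / q) := by
  set F₁ := fun x => w x ^ (1 / p) * |G x|
  set F₂ := fun x => w x ^ (1 / q) * |ψ x / w x|
  have hF₁₀ : 0 ≤ᵐ[μ] F₁ := hw.mono fun x hx => by positivity
  have hF₂₀ : 0 ≤ᵐ[μ] F₂ := hw.mono fun x hx => by positivity
  have hF₁ : (fun x => F₁ x ^ p) =ᵐ[μ] fun x => w x * |G x| ^ p :=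
    hw.mono fun x hx => Real.rpow_one_div_mul_abs_rpow hpq.ne_zero hx.le _
  have hF₂ : (fun x => F₂ x ^ q) =ᵐ[μ] fun x => w x * |ψ x / w x| ^ q :=
    hw.mono fun x hx => Real.rpow_one_div_mul_abs_rpow hpq.symm.ne_zero hx.le _
  have hF₁F₂ : (fun x => |G x * ψ x|) =ᵐ[μ] fun x => F₁ x * F₂ x := by
    filter_upwards [hw] with x hx
    have hw_split : w x ^ (1 / p) * w x ^ (1 / q) = w x := by
      rw [← Real.rpow_add hx, hpq.one_div_add_one_div, div_one, Real.rpow_one]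
    calc |G x * ψ x| = w x ^ (1 / p) * w x ^ (1 / q) * (|G x| * |ψ x / w x|) := by
          rw [hw_split, abs_mul, abs_div, abs_of_pos hx]
          field_simp
      _ = F₁ x * F₂ x := by ring
  have hF₁m : AEStronglyMeasurable F₁ μ := AEMeasurable.aestronglyMeasurable (by fun_prop)
  have hF₂m : AEStronglyMeasurable F₂ μ := AEMeasurable.aestronglyMeasurable (by fun_prop)
  calc |∫ x, G x * ψ x ∂μ| ≤ ∫ x, |G x * ψ x| ∂μ := abs_integral_le_integral_abs
    _ = ∫ x, F₁ x * F₂ x ∂μ := integral_congr_ae hF₁F₂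
    _ ≤ (∫ x, F₁ x ^ p ∂μ) ^ (1 / p) * (∫ x, F₂ x ^ q ∂μ) ^ (1 / q) :=
        integral_mul_le_Lp_mul_Lq_of_nonneg hpq hF₁₀ hF₂₀
          (memLp_ofReal_of_integrable_rpow hpq.pos hF₁m hF₁₀ (hG.congr hF₁.symm))
          (memLp_ofReal_of_integrable_rpow hpq.symm.pos hF₂m hF₂₀ (hψ.congr hF₂.symm))
    _ = _ := by rw [integral_congr_ae hF₁, integral_congr_ae hF₂]

end WeightedHolder

theorem integrableOn_Ioo_pow_mul_one_sub_sq_rpow (n : ℕ) {a : ℝ} (ha : -1 < a) :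
    IntegrableOn (fun y : ℝ => y ^ n * (1 - y ^ 2) ^ a) (Ioo 0 1) := by
  have hsing : IntegrableOn (fun y : ℝ => (1 - y) ^ a) (Ioo 0 1) := by
    have h := (intervalIntegral.intervalIntegrable_rpow' ha (a := 0) (b := 1)).comp_sub_left 1
    rwa [sub_self, sub_zero, IntervalIntegrable.symm_iff,
      intervalIntegrable_iff_integrableOn_Ioo_of_le zero_le_one] at h
  have hcont : ContinuousOn (fun y : ℝ => (1 + y) ^ a * y ^ n) (Icc 0 1) := by
    refine ContinuousOn.mul (ContinuousOn.rpow_const (by fun_prop) fun y hy => ?_) (by fun_prop)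
    exact Or.inl (by linarith [hy.1])
  refine (hsing.mul_continuousOn_of_subset hcont measurableSet_Ioo isCompact_Icc
    Ioo_subset_Icc_self).congr_fun (fun y hy => ?_) measurableSet_Ioo
  have h : 1 - y ^ 2 = (1 - y) * (1 + y) := by ring
  dsimp only
  rw [h, Real.mul_rpow (by linarith [hy.2]) (by linarith [hy.1])]
  ring

theorem one_sub_norm_sq_pos_of_mem_ball {E : Type*} [SeminormedAddCommGroup E] {x : E}
    (hx : x ∈ ball (0 : E) 1) : 0 < 1 - ‖x‖ ^ 2 := by
  nlinarith [mem_ball_zero_iff.1 hx, norm_nonneg x]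

section InnerProductSpace

variable {E : Type*} [NormedAddCommGroup E] [InnerProductSpace ℝ E]

theorem integrableOn_ball_one_sub_norm_sq_rpow [FiniteDimensional ℝ E] [MeasurableSpace E]
    [BorelSpace E] [Nontrivial E] (μ : Measure E) [μ.IsAddHaarMeasure] {a : ℝ} (ha : -1 < a) :
    IntegrableOn (fun x : E => (1 - ‖x‖ ^ 2) ^ a) (ball 0 1) μ :=
  (integrableOn_fun_norm_addHaar μ (f := fun y => (1 - y ^ 2) ^ a)).2
    (integrableOn_Ioo_pow_mul_one_sub_sq_rpow _ ha)

theorem measurable_gradient [CompleteSpace E] [MeasurableSpace E] [BorelSpace E] (f : E → ℝ) :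
    Measurable (gradient f) :=
  (InnerProductSpace.toDual ℝ E).symm.continuous.measurable.comp (measurable_fderiv ℝ f)

noncomputable def fenePotential (k : ℝ) (x : E) : ℝ := -k * Real.log (1 - ‖x‖ ^ 2)

theorem hasGradientAt_fenePotential [CompleteSpace E] (k : ℝ) {x : E} (hx : ‖x‖ ≠ 1) :
    HasGradientAt (fenePotential k) ((2 * k / (1 - ‖x‖ ^ 2)) • x) x := by
  have hx' : 1 - ‖x‖ ^ 2 ≠ 0 := by
    rw [sub_ne_zero, ne_comm, Ne, pow_eq_one_iff_of_nonneg (norm_nonneg x) two_ne_zero]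
    exact hx
  have h := (((hasFDerivAt_id x).norm_sq.const_sub 1).log hx').const_mul (-k)
  rw [hasGradientAt_iff_hasFDerivAt]
  refine h.congr_fderiv (ContinuousLinearMap.ext fun y => ?_)
  simp only [id_eq, ContinuousLinearMap.comp_id, smul_neg, neg_smul, neg_neg,
    smul_apply, coe_innerSL_apply, nsmul_eq_mul, Nat.cast_ofNat, smul_eq_mul,
    map_smul, InnerProductSpace.toDual_apply_apply]
  ring

theorem gradient_fenePotential [CompleteSpace E] (k : ℝ) {x : E} (hx : ‖x‖ ≠ 1) :
    gradient (fenePotential k) x = (2 * k / (1 - ‖x‖ ^ 2)) • x :=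
  (hasGradientAt_fenePotential k hx).gradient

end InnerProductSpace

section FENE

variable {ι : Type*} [Fintype ι] {k c p : ℝ}

noncomputable def feneStressKernel (k : ℝ) (i j : ι) (x : EuclideanSpace ℝ ι) : ℝ :=
  x i * gradient (fenePotential k) x j

theorem measurable_feneStressKernel (k : ℝ) (i j : ι) : Measurable (feneStressKernel k i j) := by
  have := measurable_gradient (fenePotential (E := EuclideanSpace ℝ ι) k)
  unfold feneStressKernel
  fun_prop

theorem abs_feneStressKernel_le (hk : 0 ≤ k) {x : EuclideanSpace ℝ ι} (hx : x ∈ ball 0 1)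
    (i j : ι) : |feneStressKernel k i j x| ≤ 2 * k / (1 - ‖x‖ ^ 2) := by
  have hb := one_sub_norm_sq_pos_of_mem_ball hx
  rw [mem_ball_zero_iff] at hx
  have hxi : |x i| ≤ 1 := (PiLp.norm_apply_le x i).trans hx.le
  have hxj : |x j| ≤ 1 := (PiLp.norm_apply_le x j).trans hx.le
  rw [feneStressKernel, gradient_fenePotential k hx.ne, PiLp.smul_apply, smul_eq_mul, abs_mul,
    abs_mul, abs_of_nonneg (by positivity : 0 ≤ 2 * k / (1 - ‖x‖ ^ 2))]
  calc |x i| * (2 * k / (1 - ‖x‖ ^ 2) * |x j|) ≤ 1 * (2 * k / (1 - ‖x‖ ^ 2) * 1) := by gcongr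
    _ = 2 * k / (1 - ‖x‖ ^ 2) := by ring

theorem weight_mul_abs_feneStressKernel_rpow_le (hk : 0 ≤ k) (hc : 0 ≤ c) (hp : 0 ≤ p)
    {x : EuclideanSpace ℝ ι} (hx : x ∈ ball 0 1) (i j : ι) :
    c * (1 - ‖x‖ ^ 2) ^ k * |feneStressKernel k i j x| ^ p ≤
      c * (2 * k) ^ p * (1 - ‖x‖ ^ 2) ^ (k - p) :=
  mul_rpow_mul_abs_rpow_le (by positivity) hc hp (one_sub_norm_sq_pos_of_mem_ball hx)
    (abs_feneStressKernel_le hk hx i j)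

variable [Nonempty ι]

theorem integrableOn_weight_mul_abs_feneStressKernel_rpow (hk : 0 ≤ k) (hc : 0 ≤ c)
    (hp : 0 ≤ p) (hkp : -1 < k - p) (i j : ι) :
    IntegrableOn (fun x => c * (1 - ‖x‖ ^ 2) ^ k * |feneStressKernel k i j x| ^ p)
      (ball (0 : EuclideanSpace ℝ ι) 1) := by
  refine ((integrableOn_ball_one_sub_norm_sq_rpow volume hkp).const_mul (c * (2 * k) ^ p)).mono'
    ?_ (ae_restrict_of_forall_mem measurableSet_ball fun x hx => ?_)
  · have := measurable_feneStressKernel k i j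
    exact Measurable.aestronglyMeasurable (by fun_prop)
  · have := one_sub_norm_sq_pos_of_mem_ball hx
    rw [Real.norm_of_nonneg (by positivity)]
    exact weight_mul_abs_feneStressKernel_rpow_le hk hc hp hx i j

theorem setIntegral_weight_mul_abs_feneStressKernel_rpow_le (hk : 0 ≤ k) (hc : 0 ≤ c)
    (hp : 0 ≤ p) (hkp : -1 < k - p) (i j : ι) :
    ∫ x in ball (0 : EuclideanSpace ℝ ι) 1,
        c * (1 - ‖x‖ ^ 2) ^ k * |feneStressKernel k i j x| ^ p ≤
      ∫ x in ball (0 : EuclideanSpace ℝ ι) 1, c * (2 * k) ^ p * (1 - ‖x‖ ^ 2) ^ (k - p) :=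
  setIntegral_mono_on (integrableOn_weight_mul_abs_feneStressKernel_rpow hk hc hp hkp i j)
    ((integrableOn_ball_one_sub_norm_sq_rpow volume hkp).const_mul _) measurableSet_ball
    fun _ hx => weight_mul_abs_feneStressKernel_rpow_le hk hc hp hx i j

end FENE

theorem stmt_4_general (k c r : ℝ) (hk : 0 < k) (hc : 0 < c)
    (hrk : 1 < (r - 1) * k)
    (U ψinf : EuclideanSpace ℝ (Fin 2) → ℝ)
    (hU : ∀ R, U R = -k * Real.log (1 - ‖R‖ ^ 2))
    (hψinf : ∀ R, ψinf R = c * (1 - ‖R‖ ^ 2) ^ k) :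
    ∃ C > 0, ∀ ψ : EuclideanSpace ℝ (Fin 2) → ℝ, Measurable ψ →
      IntegrableOn (fun R => ψinf R * |ψ R / ψinf R| ^ r)
        (Metric.ball (0 : EuclideanSpace ℝ (Fin 2)) 1) →
      ∀ i j : Fin 2,
        |∫ R in Metric.ball (0 : EuclideanSpace ℝ (Fin 2)) 1,
            R i * gradient U R j * ψ R| ≤
          C * (∫ R in Metric.ball (0 : EuclideanSpace ℝ (Fin 2)) 1,
            ψinf R * |ψ R / ψinf R| ^ r) ^ (1 / r) := by
  obtain rfl : U = fenePotential k := funext hU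
  obtain rfl : ψinf = fun R => c * (1 - ‖R‖ ^ 2) ^ k := funext hψinf
  have hkr' := Real.neg_one_lt_sub_conjExponent hk hrk
  set r' := r.conjExponent
  have hpq : r'.HolderConjugate r := (Real.HolderConjugate.conjExponent (by nlinarith)).symm
  set B := ball (0 : EuclideanSpace ℝ (Fin 2)) 1
  have hw : ∀ R ∈ B, 0 < c * (1 - ‖R‖ ^ 2) ^ k :=
    fun R hR => by have := one_sub_norm_sq_pos_of_mem_ball hR; positivity
  set M := ∫ R in B, c * (2 * k) ^ r' * (1 - ‖R‖ ^ 2) ^ (k - r')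
  have hM₀ : 0 ≤ M := setIntegral_nonneg measurableSet_ball fun R hR => by
    have := one_sub_norm_sq_pos_of_mem_ball hR; positivity
  refine ⟨M ^ (1 / r') + 1, by positivity, fun ψ hψ hint i j => ?_⟩
  have hN : 0 ≤ ∫ R in B, c * (1 - ‖R‖ ^ 2) ^ k * |ψ R / (c * (1 - ‖R‖ ^ 2) ^ k)| ^ r :=
    setIntegral_nonneg measurableSet_ball fun R hR => by have := hw R hR; positivity
  calc _ ≤ _ := abs_integral_mul_le_weighted_holder (G := feneStressKernel k i j) hpq
          (ae_restrict_of_forall_mem measurableSet_ball hw) (by fun_prop (disch := exact hk.le))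
          (measurable_feneStressKernel k i j).aestronglyMeasurable hψ.aestronglyMeasurable
          (integrableOn_weight_mul_abs_feneStressKernel_rpow hk.le hc.le hpq.nonneg hkr' i j) hint
    _ ≤ M ^ (1 / r') * _ := by
        gcongr
        · exact setIntegral_nonneg measurableSet_ball fun R hR => by have := hw R hR; positivity
        · exact hpq.one_div_nonneg
        · exact setIntegral_weight_mul_abs_feneStressKernel_rpow_le hk.le hc.le hpq.nonneg hkr' i j
    _ ≤ (M ^ (1 / r') + 1) * _ := by gcongr; linarith

/-- the FENE elastic stress τ_{ij}(ψ) = ∫_B R_i ∂_{R_j}U ψ dR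
is bounded by the weighted 𝓛^r norm of ψ when (r-1)k > 1. -/
theorem stmt_4 (k c r : ℝ) (hk : 0 < k) (hc : 0 < c) (hr : 2 ≤ r)
    (hrk : 1 < (r - 1) * k)
    (U ψinf : EuclideanSpace ℝ (Fin 2) → ℝ)
    (hU : ∀ R, U R = -k * Real.log (1 - ‖R‖ ^ 2))
    (hψinf : ∀ R, ψinf R = c * (1 - ‖R‖ ^ 2) ^ k) :
    ∃ C > 0, ∀ ψ : EuclideanSpace ℝ (Fin 2) → ℝ, Measurable ψ →
      IntegrableOn (fun R => ψinf R * |ψ R / ψinf R| ^ r)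
        (Metric.ball (0 : EuclideanSpace ℝ (Fin 2)) 1) →
      ∀ i j : Fin 2,
        |∫ R in Metric.ball (0 : EuclideanSpace ℝ (Fin 2)) 1,
            R i * gradient U R j * ψ R| ≤
          C * (∫ R in Metric.ball (0 : EuclideanSpace ℝ (Fin 2)) 1,
            ψinf R * |ψ R / ψinf R| ^ r) ^ (1 / r) :=
  stmt_4_general k c r hk hc hrk U ψinf hU hψinf
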